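/- arXiv:2602.01825 — 5 statements merged into one kernel-verified Lean document; each statement's English description precedes it below -/
import Mathlib

section
/- For every h ∈ {1,…,H}, every function V : S → ℝ, and every (s,a) ∈ S × A, the robust Bellman backup satisfies (𝔹_h V)(s,a) = ∑_{i=1}^d φ_i(s,a) · min_{k∈[K]} [ θ_{h,i}^k + ∑_{s'∈S} μ_{h,i}^k(s') V(s') ]; in particular (𝔹_h V)(s,a) = φ(s,a)ᵀ w_h where w_{h,i} = min_{k∈[K]} [ θ_{h,i}^k + ∑_{s'} μ_{h,i}^k(s') V(s') ], so the robust Bellman operator preserves linearity in the feature map φ. -/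
open scoped BigOperators
open MeasureTheory

noncomputable section

/-- The probability simplex `Δ^{K-1} ⊆ ℝ^K`. -/
def probSimplex (K : ℕ) : Set (Fin K → ℝ) :=
  {α | (∀ k, 0 ≤ α k) ∧ ∑ k, α k = 1}

/-- Data of a group-linear DRMDP: shared simplex features `φ`, and for every step `h`,
coordinate `i` and site `k`, a reward factor `θ h i k ∈ [0,1]` and a probability
mass function `μ h i k` on the (finite) state space `S`. -/
structure DRMDP (S A : Type) [Fintype S] (H K d : ℕ) where
  φ : S → A → Fin d → ℝ
  φ_nonneg : ∀ s a i, 0 ≤ φ s a i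
  φ_sum : ∀ s a, ∑ i, φ s a i = 1
  θ : Fin H → Fin d → Fin K → ℝ
  θ_nonneg : ∀ h i k, 0 ≤ θ h i k
  θ_le_one : ∀ h i k, θ h i k ≤ 1
  μ : Fin H → Fin d → Fin K → S → ℝ
  μ_nonneg : ∀ h i k s', 0 ≤ μ h i k s'
  μ_sum : ∀ h i k, ∑ s', μ h i k s' = 1

namespace DRMDP

variable {S A : Type} [Fintype S] [Fintype A] {H K d : ℕ}

/-- Site-`k` transition kernel `P_h^k(s'|s,a) = ∑_i φ_i(s,a) μ_{h,i}^k(s')`. -/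
def Pk (M : DRMDP S A H K d) (h : Fin H) (k : Fin K) (s : S) (a : A) (s' : S) : ℝ :=
  ∑ i, M.φ s a i * M.μ h i k s'

/-- Site-`k` expected reward `r_h^k(s,a) = ∑_i φ_i(s,a) θ_{h,i}^k`. -/
def rk (M : DRMDP S A H K d) (h : Fin H) (k : Fin K) (s : S) (a : A) : ℝ :=
  ∑ i, M.φ s a i * M.θ h i k

/-- Membership `(P,r) ∈ U_h` in the d-rectangular feature-wise cross-site
convex-hull uncertainty set. -/
def inU (M : DRMDP S A H K d) (h : Fin H) (P : S → A → S → ℝ) (r : S → A → ℝ) : Prop :=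
  ∃ α : Fin d → Fin K → ℝ,
    (∀ i, α i ∈ probSimplex K) ∧
    (∀ s a, r s a = ∑ i, M.φ s a i * ∑ k, α i k * M.θ h i k) ∧
    (∀ s a s', P s a s' = ∑ i, M.φ s a i * ∑ k, α i k * M.μ h i k s')

/-- Membership `P ∈ 𝒫_h` (the transition kernels appearing in `U_h`). -/
def inP (M : DRMDP S A H K d) (h : Fin H) (P : S → A → S → ℝ) : Prop :=
  ∃ r, M.inU h P r

/-- The robust Bellman operator
`(𝔹_h V)(s,a) = inf_{(P,r) ∈ U_h} [ r(s,a) + ∑_{s'} P(s'|s,a) V(s') ]`. -/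
def bellman (M : DRMDP S A H K d) (h : Fin H) (V : S → ℝ) (s : S) (a : A) : ℝ :=
  sInf {x | ∃ P r, M.inU h P r ∧ x = r s a + ∑ s', P s a s' * V s'}

end DRMDP

/-- A Markov (possibly randomized) policy: `π h (·|s)` is a pmf on the actions. -/
def IsPolicy {S A : Type} [Fintype A] (H : ℕ) (π : Fin H → S → A → ℝ) : Prop :=
  ∀ h s, (∀ a, 0 ≤ π h s a) ∧ ∑ a, π h s a = 1

/-- `cumW H π P r t s` is the expected cumulative reward `W_t(s)` from (0-indexed)
step `t` on, under policy `π` and model sequence `(P,r)`; `W_t ≡ 0` for `t ≥ H`. -/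
def cumW {S A : Type} [Fintype S] [Fintype A] (H : ℕ)
    (π : Fin H → S → A → ℝ) (P : Fin H → S → A → S → ℝ) (r : Fin H → S → A → ℝ) :
    ℕ → S → ℝ
  | t =>
    if ht : t < H then
      fun s => ∑ a, π ⟨t, ht⟩ s a *
        (r ⟨t, ht⟩ s a + ∑ s', P ⟨t, ht⟩ s a s' * cumW H π P r (t + 1) s')
    else fun _ => 0
  termination_by t => H - t
  decreasing_by omega

namespace DRMDP

variable {S A : Type} [Fintype S] [Fintype A] {H K d : ℕ}

/-- Robust value function `V_t^π(s)`: worst case of `W_t(s)` over model sequences in `∏ U_h`. -/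
def robustV (M : DRMDP S A H K d) (π : Fin H → S → A → ℝ) (t : ℕ) (s : S) : ℝ :=
  sInf {x | ∃ P r, (∀ h : Fin H, M.inU h (P h) (r h)) ∧ x = cumW H π P r t s}

/-- Robust Q-function `Q_h^π(s,a)`. -/
def robustQ (M : DRMDP S A H K d) (π : Fin H → S → A → ℝ) (h : Fin H) (s : S) (a : A) : ℝ :=
  sInf {x | ∃ P r, (∀ t : Fin H, M.inU t (P t) (r t)) ∧
    x = r h s a + ∑ s', P h s a s' * cumW H π P r ((h : ℕ) + 1) s'}

/-- `πs` is a robust optimal Markov policy. -/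
def IsOptimalRobust (M : DRMDP S A H K d) (πs : Fin H → S → A → ℝ) : Prop :=
  IsPolicy H πs ∧ ∀ π, IsPolicy H π → ∀ (h : Fin H) (s : S),
    M.robustV π (h : ℕ) s ≤ M.robustV πs (h : ℕ) s

end DRMDP

/-- Step-`t` state distribution of the Markov chain started at `s₁`, following
policy `π` and transition kernels `P`. -/
def visit {S A : Type} [Fintype S] [Fintype A] [DecidableEq S] (H : ℕ)
    (π : Fin H → S → A → ℝ) (P : Fin H → S → A → S → ℝ) (s₁ : S) : ℕ → S → ℝ
  | 0 => fun s => if s = s₁ then 1 else 0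
  | t + 1 => fun s' =>
      if ht : t < H then
        ∑ s, ∑ a, visit H π P s₁ t s * π ⟨t, ht⟩ s a * P ⟨t, ht⟩ s a s'
      else 0

/-- `E^{π,P}[ f(s_h, a_h) | s_1 = s₁ ]` (0-indexed step `h`). -/
def expAt {S A : Type} [Fintype S] [Fintype A] [DecidableEq S] (H : ℕ)
    (π : Fin H → S → A → ℝ) (P : Fin H → S → A → S → ℝ) (s₁ : S)
    (h : Fin H) (f : S → A → ℝ) : ℝ :=
  ∑ s, ∑ a, visit H π P s₁ (h : ℕ) s * π h s a * f s a


/-- The robust Bellman backup over the d-rectangular cross-site convex-hull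
uncertainty set is the feature-wise minimum over sites:
`(𝔹_h V)(s,a) = ∑_i φ_i(s,a) · min_k [ θ_{h,i}^k + ⟨μ_{h,i}^k, V⟩ ] = φ(s,a)ᵀ w_h`,
so the robust Bellman operator preserves linearity in the feature map. -/
theorem stmt_2 {S A : Type} [Fintype S] [Fintype A] {H K d : ℕ} (hK : 1 ≤ K)
    (M : DRMDP S A H K d) (h : Fin H) (V : S → ℝ) (s : S) (a : A) :
    M.bellman h V s a =
      ∑ i, M.φ s a i *
        Finset.univ.inf' (Finset.univ_nonempty_iff.mpr ⟨⟨0, hK⟩⟩)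
          (fun k => M.θ h i k + ∑ s', M.μ h i k s' * V s') ∧
    ∀ w : Fin d → ℝ,
      (∀ i, w i = Finset.univ.inf' (Finset.univ_nonempty_iff.mpr ⟨⟨0, hK⟩⟩)
          (fun k => M.θ h i k + ∑ s', M.μ h i k s' * V s')) →
      M.bellman h V s a = ∑ i, M.φ s a i * w i := by
  classical
  have ne : (Finset.univ : Finset (Fin K)).Nonempty := Finset.univ_nonempty_iff.mpr ⟨⟨0, hK⟩⟩
  set g : Fin d → Fin K → ℝ := fun i k => M.θ h i k + ∑ s', M.μ h i k s' * V s' with hg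
  set m : Fin d → ℝ := fun i => Finset.univ.inf' ne (g i) with hm
  -- rearrangement key
  have key : ∀ (α : Fin d → Fin K → ℝ),
      (∑ i, M.φ s a i * ∑ k, α i k * M.θ h i k) +
        ∑ s', (∑ i, M.φ s a i * ∑ k, α i k * M.μ h i k s') * V s'
      = ∑ i, M.φ s a i * ∑ k, α i k * g i k := by
    intro α
    have h2 : ∑ s', (∑ i, M.φ s a i * ∑ k, α i k * M.μ h i k s') * V s'
        = ∑ i, M.φ s a i * ∑ k, α i k * ∑ s', M.μ h i k s' * V s' := by
      calc ∑ s', (∑ i, M.φ s a i * ∑ k, α i k * M.μ h i k s') * V s'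
          = ∑ s', ∑ i, (M.φ s a i * ∑ k, α i k * M.μ h i k s') * V s' :=
            Finset.sum_congr rfl fun s' _ => Finset.sum_mul ..
        _ = ∑ i, ∑ s', (M.φ s a i * ∑ k, α i k * M.μ h i k s') * V s' := Finset.sum_comm
        _ = ∑ i, M.φ s a i * ∑ k, α i k * ∑ s', M.μ h i k s' * V s' := by
            refine Finset.sum_congr rfl fun i _ => ?_
            simp only [Finset.sum_mul, Finset.mul_sum]
            rw [Finset.sum_comm]
            exact Finset.sum_congr rfl fun k _ => Finset.sum_congr rfl fun s' _ => by ring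
    rw [h2, ← Finset.sum_add_distrib]
    refine Finset.sum_congr rfl fun i _ => ?_
    rw [← mul_add, ← Finset.sum_add_distrib]
    exact congrArg _ (Finset.sum_congr rfl fun k _ => by rw [hg, ← mul_add])
  have main : M.bellman h V s a = ∑ i, M.φ s a i * m i := by
    apply le_antisymm
    · -- achieved by indicator α at argmin
      choose ki hki hval using fun i => Finset.exists_mem_eq_inf' ne (g i)
      set α : Fin d → Fin K → ℝ := fun i k => if k = ki i then 1 else 0 with hα
      apply csInf_le
      · refine ⟨∑ i, M.φ s a i * m i, ?_⟩
        rintro x ⟨P, r, ⟨β, hβ, hr, hP⟩, rfl⟩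
        have : r s a + ∑ s', P s a s' * V s' = ∑ i, M.φ s a i * ∑ k, β i k * g i k := by
          rw [hr]
          have := key β
          rw [← this]
          congr 1
          exact Finset.sum_congr rfl fun s' _ => by rw [hP]
        rw [this]
        refine Finset.sum_le_sum fun i _ => mul_le_mul_of_nonneg_left ?_ (M.φ_nonneg s a i)
        calc m i = (∑ k, β i k) * m i := by rw [(hβ i).2, one_mul]
          _ = ∑ k, β i k * m i := by rw [Finset.sum_mul]
          _ ≤ ∑ k, β i k * g i k := Finset.sum_le_sum fun k _ =>
              mul_le_mul_of_nonneg_left (Finset.inf'_le _ (Finset.mem_univ k)) ((hβ i).1 k)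
      · refine ⟨fun s a s' => ∑ i, M.φ s a i * ∑ k, α i k * M.μ h i k s',
          fun s a => ∑ i, M.φ s a i * ∑ k, α i k * M.θ h i k,
          ⟨α, ?_, fun _ _ => rfl, fun _ _ _ => rfl⟩, ?_⟩
        · intro i
          constructor
          · intro k; simp [hα]; split <;> norm_num
          · simp [hα]
        · rw [key α]
          refine (Finset.sum_congr rfl fun i _ => ?_)
          have : ∑ k, α i k * g i k = g i (ki i) := by
            simp [hα, ite_mul]
          rw [this, ← hval i]
    · -- lower bound
      apply le_csInf
      · choose ki hki hval using fun i => Finset.exists_mem_eq_inf' ne (g i)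
        set α : Fin d → Fin K → ℝ := fun i k => if k = ki i then 1 else 0 with hα
        exact ⟨_, fun s a s' => ∑ i, M.φ s a i * ∑ k, α i k * M.μ h i k s',
          fun s a => ∑ i, M.φ s a i * ∑ k, α i k * M.θ h i k,
          ⟨α, fun i => ⟨fun k => by simp [hα]; split <;> norm_num, by simp [hα]⟩,
            fun _ _ => rfl, fun _ _ _ => rfl⟩, rfl⟩
      · rintro x ⟨P, r, ⟨β, hβ, hr, hP⟩, rfl⟩
        have : r s a + ∑ s', P s a s' * V s' = ∑ i, M.φ s a i * ∑ k, β i k * g i k := by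
          rw [hr, ← key β]
          congr 1
          exact Finset.sum_congr rfl fun s' _ => by rw [hP]
        rw [this]
        refine Finset.sum_le_sum fun i _ => mul_le_mul_of_nonneg_left ?_ (M.φ_nonneg s a i)
        calc m i = (∑ k, β i k) * m i := by rw [(hβ i).2, one_mul]
          _ = ∑ k, β i k * m i := by rw [Finset.sum_mul]
          _ ≤ ∑ k, β i k * g i k := Finset.sum_le_sum fun k _ =>
              mul_le_mul_of_nonneg_left (Finset.inf'_le _ (Finset.mem_univ k)) ((hβ i).1 k)
  exact ⟨main, fun w hw => by
    rw [main]; exact Finset.sum_congr rfl fun i _ => by rw [hw i]⟩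

end
end

section
/- For every h ∈ {1,…,H} and every function V : S → ℝ, there exists a single model (P*, r*) ∈ U_h that attains the infimum defining (𝔹_h V)(s,a) simultaneously for all (s,a) ∈ S × A; it can be taken with each mixing weight α_{h,i} equal to the standard basis vector of a site k_i minimizing θ_{h,i}^k + ∑_{s'} μ_{h,i}^k(s') V(s') over k ∈ [K]. -/
open scoped BigOperators
open MeasureTheory

noncomputable section

/-- For every step `h` and value function `V` there is a single model
`(P*, r*) ∈ U_h` attaining the infimum defining `(𝔹_h V)(s,a)` simultaneously
for all `(s,a)`; it can be taken with each mixing weight `α_{h,i}` equal to the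
standard basis vector of a site `k_i` minimizing `θ_{h,i}^k + ⟨μ_{h,i}^k, V⟩`. -/
theorem stmt_3 {S A : Type} [Fintype S] [Fintype A] {H K d : ℕ} (hK : 1 ≤ K)
    (M : DRMDP S A H K d) (h : Fin H) (V : S → ℝ) :
    ∃ km : Fin d → Fin K,
      (∀ i k, M.θ h i (km i) + ∑ s', M.μ h i (km i) s' * V s' ≤
        M.θ h i k + ∑ s', M.μ h i k s' * V s') ∧
      (∀ i, (Pi.single (km i) (1 : ℝ) : Fin K → ℝ) ∈ probSimplex K) ∧
      M.inU h
        (fun s a s' => ∑ i, M.φ s a i *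
          ∑ k, (Pi.single (km i) (1 : ℝ) : Fin K → ℝ) k * M.μ h i k s')
        (fun s a => ∑ i, M.φ s a i *
          ∑ k, (Pi.single (km i) (1 : ℝ) : Fin K → ℝ) k * M.θ h i k) ∧
      ∀ s a,
        M.bellman h V s a =
          (∑ i, M.φ s a i *
            ∑ k, (Pi.single (km i) (1 : ℝ) : Fin K → ℝ) k * M.θ h i k) +
          ∑ s', (∑ i, M.φ s a i *
            ∑ k, (Pi.single (km i) (1 : ℝ) : Fin K → ℝ) k * M.μ h i k s') * V s' := by
  haveI : Nonempty (Fin K) := ⟨⟨0, hK⟩⟩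
  classical
  set g : Fin d → Fin K → ℝ := fun i k => M.θ h i k + ∑ s', M.μ h i k s' * V s' with hg
  have hmin : ∀ i, ∃ k : Fin K, ∀ k', g i k ≤ g i k' := by
    intro i
    obtain ⟨k, -, hk⟩ := Finset.exists_min_image Finset.univ (g i) Finset.univ_nonempty
    exact ⟨k, fun k' => hk k' (Finset.mem_univ _)⟩
  choose km hkm using hmin
  have hsingle : ∀ (i : Fin d) (f : Fin K → ℝ),
      ∑ k, (Pi.single (km i) (1 : ℝ) : Fin K → ℝ) k * f k = f (km i) := by
    intro i f
    rw [Finset.sum_eq_single (km i)]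
    · simp
    · intro b _ hb; simp [Pi.single_apply, hb]
    · intro hb; exact absurd (Finset.mem_univ _) hb
  have hsimplex : ∀ i, (Pi.single (km i) (1 : ℝ) : Fin K → ℝ) ∈ probSimplex K := by
    intro i
    constructor
    · intro k
      rcases eq_or_ne k (km i) with rfl | hk
      · simp
      · simp [Pi.single_apply, hk]
    · simp [Finset.sum_pi_single]
  have hrearr : ∀ (α : Fin d → Fin K → ℝ) (s : S) (a : A),
      (∑ i, M.φ s a i * ∑ k, α i k * M.θ h i k) +
        ∑ s', (∑ i, M.φ s a i * ∑ k, α i k * M.μ h i k s') * V s' =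
      ∑ i, M.φ s a i * ∑ k, α i k * g i k := by
    intro α s a
    have h2 : ∑ s', (∑ i, M.φ s a i * ∑ k, α i k * M.μ h i k s') * V s' =
        ∑ i, M.φ s a i * ∑ k, α i k * ∑ s', M.μ h i k s' * V s' := by
      simp only [Finset.sum_mul]
      rw [Finset.sum_comm]
      refine Finset.sum_congr rfl fun i _ => ?_
      rw [Finset.mul_sum]
      simp only [Finset.sum_mul, Finset.mul_sum]
      rw [Finset.sum_comm]
      refine Finset.sum_congr rfl fun k _ => ?_
      refine Finset.sum_congr rfl fun s' _ => ?_
      ring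
    rw [h2, ← Finset.sum_add_distrib]
    refine Finset.sum_congr rfl fun i _ => ?_
    rw [← mul_add, ← Finset.sum_add_distrib]
    refine congrArg _ (Finset.sum_congr rfl fun k _ => ?_)
    rw [hg]; ring
  have hTval : ∀ (s : S) (a : A),
      (∑ i, M.φ s a i * ∑ k, (Pi.single (km i) (1 : ℝ) : Fin K → ℝ) k * M.θ h i k) +
        ∑ s', (∑ i, M.φ s a i *
          ∑ k, (Pi.single (km i) (1 : ℝ) : Fin K → ℝ) k * M.μ h i k s') * V s' =
      ∑ i, M.φ s a i * g i (km i) := by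
    intro s a
    rw [hrearr (fun i => Pi.single (km i) (1 : ℝ)) s a]
    exact Finset.sum_congr rfl fun i _ => congrArg _ (hsingle i (g i))
  have hinU : M.inU h
      (fun s a s' => ∑ i, M.φ s a i *
        ∑ k, (Pi.single (km i) (1 : ℝ) : Fin K → ℝ) k * M.μ h i k s')
      (fun s a => ∑ i, M.φ s a i *
        ∑ k, (Pi.single (km i) (1 : ℝ) : Fin K → ℝ) k * M.θ h i k) :=
    ⟨fun i => Pi.single (km i) (1 : ℝ), hsimplex, fun _ _ => rfl, fun _ _ _ => rfl⟩
  refine ⟨km, hkm, hsimplex, hinU, fun s a => ?_⟩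
  have hlow : ∀ x ∈ {x | ∃ P r, M.inU h P r ∧ x = r s a + ∑ s', P s a s' * V s'},
      (∑ i, M.φ s a i * g i (km i)) ≤ x := by
    rintro x ⟨P, r, ⟨α, hα, hr, hP⟩, rfl⟩
    have hx : r s a + ∑ s', P s a s' * V s' = ∑ i, M.φ s a i * ∑ k, α i k * g i k := by
      rw [hr s a]
      have : ∑ s', P s a s' * V s' =
          ∑ s', (∑ i, M.φ s a i * ∑ k, α i k * M.μ h i k s') * V s' :=
        Finset.sum_congr rfl fun s' _ => by rw [hP s a s']
      rw [this, hrearr]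
    rw [hx]
    refine Finset.sum_le_sum fun i _ => ?_
    refine mul_le_mul_of_nonneg_left ?_ (M.φ_nonneg s a i)
    calc g i (km i) = ∑ k, α i k * g i (km i) := by
          rw [← Finset.sum_mul, (hα i).2, one_mul]
      _ ≤ ∑ k, α i k * g i k :=
          Finset.sum_le_sum fun k _ =>
            mul_le_mul_of_nonneg_left (hkm i k) ((hα i).1 k)
  have hmem : ((∑ i, M.φ s a i *
        ∑ k, (Pi.single (km i) (1 : ℝ) : Fin K → ℝ) k * M.θ h i k) +
      ∑ s', (∑ i, M.φ s a i *
        ∑ k, (Pi.single (km i) (1 : ℝ) : Fin K → ℝ) k * M.μ h i k s') * V s')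
      ∈ {x | ∃ P r, M.inU h P r ∧ x = r s a + ∑ s', P s a s' * V s'} :=
    ⟨_, _, hinU, rfl⟩
  refine le_antisymm (csInf_le ⟨_, hlow⟩ hmem) (le_csInf ⟨_, hmem⟩ fun x hx => ?_)
  rw [hTval s a]
  exact hlow x hx

end
end

section
/- (Robust Bellman equations) For every Markov policy π, every h ∈ {1,…,H}, and every (s,a) ∈ S × A: Q_h^π(s,a) = inf_{(P_h,r_h) ∈ U_h} [ r_h(s,a) + ∑_{s'} P_h(s'|s,a) V_{h+1}^π(s') ] and V_h^π(s) = ∑_{a∈A} π_h(a|s) Q_h^π(s,a), where V_{H+1}^π ≡ 0. -/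
open scoped BigOperators
open MeasureTheory

noncomputable section

/-!
Since `U_h` is a product, over the features `i`, of simplices of site weights, the inner
minimisation decouples: `inf_{U_h} [r + P V](s,a) = ∑_i φ_i(s,a) min_k (θ_{h,i}^k + μ_{h,i}^k · V)`,
and the minimum is attained by putting all weight of feature `i` on one minimising site.
Let `V_t` be the backward recursion `V_t = ∑_a π_t(a|·) · (that minimum against V_{t+1})`.
Choosing at every step the minimising sites against `V_{t+1}` gives a single admissible model
sequence whose cumulative reward is `V_t` for every start step and state, while monotonicity
of the backup (`π`, `P ≥ 0`) shows `V_t ≤ W_t` for every admissible sequence. So the robust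
value and Q-functions are given by this recursion, and the Bellman equations are its defining
equations.
-/

theorem single_mem_probSimplex {K : ℕ} (k : Fin K) : Pi.single k 1 ∈ probSimplex K :=
  ⟨fun j => by by_cases hj : j = k <;> simp [hj], by simp⟩

theorem le_sum_mul_of_mem_probSimplex {K : ℕ} {α g : Fin K → ℝ} (hα : α ∈ probSimplex K)
    {k₀ : Fin K} (hmin : ∀ k, g k₀ ≤ g k) : g k₀ ≤ ∑ k, α k * g k :=
  calc g k₀ = ∑ k, α k * g k₀ := by rw [← Finset.sum_mul, hα.2, one_mul]
    _ ≤ ∑ k, α k * g k := by gcongr with k; exacts [hα.1 k, hmin k]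

section cumW

variable {S A : Type} [Fintype S] [Fintype A] {H : ℕ} (π : Fin H → S → A → ℝ)
  (P : Fin H → S → A → S → ℝ) (r : Fin H → S → A → ℝ)

theorem cumW_of_lt {t : ℕ} (ht : t < H) (s : S) :
    cumW H π P r t s =
      ∑ a, π ⟨t, ht⟩ s a * (r ⟨t, ht⟩ s a + ∑ s', P ⟨t, ht⟩ s a s' * cumW H π P r (t + 1) s') := by
  rw [cumW, dif_pos ht]

theorem cumW_of_le {t : ℕ} (ht : H ≤ t) (s : S) : cumW H π P r t s = 0 := by
  rw [cumW, dif_neg (not_lt.2 ht)]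

end cumW

namespace DRMDP

variable {S A : Type} [Fintype S] {H K d : ℕ} (M : DRMDP S A H K d)

def rewardOf (h : Fin H) (α : Fin d → Fin K → ℝ) (s : S) (a : A) : ℝ :=
  ∑ i, M.φ s a i * ∑ k, α i k * M.θ h i k

def kernelOf (h : Fin H) (α : Fin d → Fin K → ℝ) (s : S) (a : A) (s' : S) : ℝ :=
  ∑ i, M.φ s a i * ∑ k, α i k * M.μ h i k s'

theorem inU_kernelOf_rewardOf {h : Fin H} {α : Fin d → Fin K → ℝ}
    (hα : ∀ i, α i ∈ probSimplex K) : M.inU h (M.kernelOf h α) (M.rewardOf h α) :=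
  ⟨α, hα, fun _ _ => rfl, fun _ _ _ => rfl⟩

theorem eq_kernelOf_rewardOf_of_inU {h : Fin H} {P : S → A → S → ℝ} {r : S → A → ℝ}
    (hU : M.inU h P r) :
    ∃ α : Fin d → Fin K → ℝ, (∀ i, α i ∈ probSimplex K) ∧
      P = M.kernelOf h α ∧ r = M.rewardOf h α := by
  obtain ⟨α, hα, hr, hP⟩ := hU
  exact ⟨α, hα, funext₃ hP, funext₂ hr⟩

theorem kernelOf_nonneg {h : Fin H} {α : Fin d → Fin K → ℝ} (hα : ∀ i, α i ∈ probSimplex K)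
    (s : S) (a : A) (s' : S) : 0 ≤ M.kernelOf h α s a s' :=
  Finset.sum_nonneg fun i _ => mul_nonneg (M.φ_nonneg s a i)
    (Finset.sum_nonneg fun k _ => mul_nonneg ((hα i).1 k) (M.μ_nonneg h i k s'))

def siteValue (h : Fin H) (V : S → ℝ) (i : Fin d) (k : Fin K) : ℝ :=
  M.θ h i k + ∑ s', M.μ h i k s' * V s'

theorem backup_eq_sum_siteValue (h : Fin H) (α : Fin d → Fin K → ℝ) (V : S → ℝ)
    (s : S) (a : A) :
    M.rewardOf h α s a + ∑ s', M.kernelOf h α s a s' * V s' =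
      ∑ i, M.φ s a i * ∑ k, α i k * M.siteValue h V i k := by
  simp only [rewardOf, kernelOf, siteValue, mul_add, Finset.mul_sum, Finset.sum_mul,
    Finset.sum_add_distrib, mul_assoc]
  rw [Finset.sum_comm (γ := S)]
  exact congrArg _ (Finset.sum_congr rfl fun i _ => Finset.sum_comm)

variable (hK : 1 ≤ K)

def greedySite (h : Fin H) (V : S → ℝ) (i : Fin d) : Fin K :=
  (Finset.univ.exists_min_image (M.siteValue h V i) ⟨⟨0, hK⟩, Finset.mem_univ _⟩).choose

theorem siteValue_greedySite_le (h : Fin H) (V : S → ℝ) (i : Fin d) (k : Fin K) :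
    M.siteValue h V i (M.greedySite hK h V i) ≤ M.siteValue h V i k :=
  (Finset.univ.exists_min_image (M.siteValue h V i)
    ⟨⟨0, hK⟩, Finset.mem_univ _⟩).choose_spec.2 k (Finset.mem_univ k)

def greedyWeights (h : Fin H) (V : S → ℝ) (i : Fin d) : Fin K → ℝ :=
  Pi.single (M.greedySite hK h V i) 1

def minBackup (h : Fin H) (V : S → ℝ) (s : S) (a : A) : ℝ :=
  ∑ i, M.φ s a i * M.siteValue h V i (M.greedySite hK h V i)

theorem backup_greedyWeights (h : Fin H) (V : S → ℝ) (s : S) (a : A) :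
    M.rewardOf h (M.greedyWeights hK h V) s a +
        ∑ s', M.kernelOf h (M.greedyWeights hK h V) s a s' * V s' =
      M.minBackup hK h V s a := by
  simp [backup_eq_sum_siteValue, greedyWeights, minBackup, Pi.single_apply]

theorem minBackup_le {h : Fin H} {α : Fin d → Fin K → ℝ} (hα : ∀ i, α i ∈ probSimplex K)
    {V W : S → ℝ} (hVW : ∀ s', V s' ≤ W s') (s : S) (a : A) :
    M.minBackup hK h V s a ≤ M.rewardOf h α s a + ∑ s', M.kernelOf h α s a s' * W s' :=
  calc M.minBackup hK h V s a
      ≤ ∑ i, M.φ s a i * ∑ k, α i k * M.siteValue h V i k := by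
        unfold minBackup
        gcongr with i
        · exact M.φ_nonneg s a i
        · exact le_sum_mul_of_mem_probSimplex (hα i) (M.siteValue_greedySite_le hK h V i)
    _ = M.rewardOf h α s a + ∑ s', M.kernelOf h α s a s' * V s' :=
        (M.backup_eq_sum_siteValue h α V s a).symm
    _ ≤ M.rewardOf h α s a + ∑ s', M.kernelOf h α s a s' * W s' := by
        gcongr with s'
        · exact M.kernelOf_nonneg hα s a s'
        · exact hVW s'

theorem bellman_eq_minBackup (h : Fin H) (V : S → ℝ) (s : S) (a : A) :
    M.bellman h V s a = M.minBackup hK h V s a := by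
  refine IsLeast.csInf_eq ⟨⟨_, _, M.inU_kernelOf_rewardOf fun i => single_mem_probSimplex _,
    (M.backup_greedyWeights hK h V s a).symm⟩, ?_⟩
  rintro x ⟨P, r, hU, rfl⟩
  obtain ⟨α, hα, rfl, rfl⟩ := M.eq_kernelOf_rewardOf_of_inU hU
  exact M.minBackup_le hK hα (fun _ => le_rfl) s a

variable [Fintype A] (π : Fin H → S → A → ℝ)

def greedyValue : ℕ → S → ℝ
  | t =>
    if ht : t < H then
      fun s => ∑ a, π ⟨t, ht⟩ s a * M.minBackup hK ⟨t, ht⟩ (greedyValue (t + 1)) s a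
    else fun _ => 0
  termination_by t => H - t
  decreasing_by omega

theorem greedyValue_of_lt {t : ℕ} (ht : t < H) (s : S) :
    M.greedyValue hK π t s =
      ∑ a, π ⟨t, ht⟩ s a * M.minBackup hK ⟨t, ht⟩ (M.greedyValue hK π (t + 1)) s a := by
  rw [greedyValue, dif_pos ht]

theorem greedyValue_of_le {t : ℕ} (ht : H ≤ t) (s : S) : M.greedyValue hK π t s = 0 := by
  rw [greedyValue, dif_neg (not_lt.2 ht)]

def greedyKernel (h : Fin H) : S → A → S → ℝ :=
  M.kernelOf h (M.greedyWeights hK h (M.greedyValue hK π (h + 1)))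

def greedyReward (h : Fin H) : S → A → ℝ :=
  M.rewardOf h (M.greedyWeights hK h (M.greedyValue hK π (h + 1)))

theorem inU_greedy (h : Fin H) : M.inU h (M.greedyKernel hK π h) (M.greedyReward hK π h) :=
  M.inU_kernelOf_rewardOf fun _ => single_mem_probSimplex _

theorem cumW_greedy (t : ℕ) (s : S) :
    cumW H π (M.greedyKernel hK π) (M.greedyReward hK π) t s = M.greedyValue hK π t s := by
  rcases lt_or_ge t H with ht | ht
  · rw [cumW_of_lt _ _ _ ht, greedyValue_of_lt _ _ _ ht]
    simp only [cumW_greedy (t + 1)]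
    exact Finset.sum_congr rfl fun a _ => congrArg _ (M.backup_greedyWeights hK _ _ s a)
  · rw [cumW_of_le _ _ _ ht, greedyValue_of_le _ _ _ ht]
termination_by H - t

theorem greedyValue_le_cumW (hπ : IsPolicy H π) {P : Fin H → S → A → S → ℝ}
    {r : Fin H → S → A → ℝ} (hU : ∀ h, M.inU h (P h) (r h)) (t : ℕ) (s : S) :
    M.greedyValue hK π t s ≤ cumW H π P r t s := by
  rcases lt_or_ge t H with ht | ht
  · rw [cumW_of_lt _ _ _ ht, greedyValue_of_lt _ _ _ ht]
    obtain ⟨α, hα, hP, hr⟩ := M.eq_kernelOf_rewardOf_of_inU (hU ⟨t, ht⟩)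
    gcongr with a
    · exact (hπ _ s).1 a
    · rw [hP, hr]
      exact M.minBackup_le hK hα (greedyValue_le_cumW hπ hU (t + 1)) s a
  · rw [cumW_of_le _ _ _ ht, greedyValue_of_le _ _ _ ht]
termination_by H - t

theorem robustV_eq_greedyValue (hπ : IsPolicy H π) (t : ℕ) (s : S) :
    M.robustV π t s = M.greedyValue hK π t s :=
  IsLeast.csInf_eq ⟨⟨_, _, M.inU_greedy hK π, (M.cumW_greedy hK π t s).symm⟩,
    by rintro x ⟨P, r, hU, rfl⟩; exact M.greedyValue_le_cumW hK π hπ hU t s⟩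

theorem robustQ_eq_minBackup (hπ : IsPolicy H π) (h : Fin H) (s : S) (a : A) :
    M.robustQ π h s a = M.minBackup hK h (M.greedyValue hK π (h + 1)) s a := by
  refine IsLeast.csInf_eq ⟨⟨_, _, M.inU_greedy hK π, ?_⟩, ?_⟩
  · simp only [cumW_greedy]
    exact (M.backup_greedyWeights hK h _ s a).symm
  · rintro x ⟨P, r, hU, rfl⟩
    obtain ⟨α, hα, hP, hr⟩ := M.eq_kernelOf_rewardOf_of_inU (hU h)
    rw [hP, hr]
    exact M.minBackup_le hK hα (M.greedyValue_le_cumW hK π hπ hU _) s a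

end DRMDP

/-- Robust Bellman equations: for any Markov policy `π`, step `h`, and `(s,a)`,
`Q_h^π(s,a) = inf_{(P_h,r_h)∈U_h} [ r_h(s,a) + ∑_{s'} P_h(s'|s,a) V_{h+1}^π(s') ]`
and `V_h^π(s) = ∑_a π_h(a|s) Q_h^π(s,a)`, with `V_{H+1}^π ≡ 0`. -/
theorem stmt_4 {S A : Type} [Fintype S] [Fintype A] {H K d : ℕ} (hK : 1 ≤ K)
    (M : DRMDP S A H K d) (π : Fin H → S → A → ℝ) (hπ : IsPolicy H π) :
    (∀ s, M.robustV π H s = 0) ∧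
    ∀ (h : Fin H) (s : S),
      (∀ a : A, M.robustQ π h s a =
        M.bellman h (fun s' => M.robustV π ((h : ℕ) + 1) s') s a) ∧
      M.robustV π (h : ℕ) s = ∑ a, π h s a * M.robustQ π h s a := by
  refine ⟨fun s => ?_, fun h s => ⟨fun a => ?_, ?_⟩⟩
  · rw [M.robustV_eq_greedyValue hK π hπ, M.greedyValue_of_le hK π le_rfl]
  · simp only [M.robustV_eq_greedyValue hK π hπ, M.robustQ_eq_minBackup hK π hπ,
      M.bellman_eq_minBackup hK]
  · rw [M.robustV_eq_greedyValue hK π hπ, M.greedyValue_of_lt hK π h.isLt]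
    simp only [M.robustQ_eq_minBackup hK π hπ]

end
end

section
/- Suppose for each h ∈ {1,…,H}: V̂_{h+1} : S → ℝ takes values in [0, H−h] (with V̂_{H+1} ≡ 0); B̂_h : S × A → ℝ and Γ_h : S × A → [0,∞) satisfy |B̂_h(s,a) − (𝔹_h V̂_{h+1})(s,a)| ≤ Γ_h(s,a) for all (s,a); and Q̂_h(s,a) = min{ B̂_h(s,a) − Γ_h(s,a), H−h+1 }⁺. Then the model evaluation error ι_h(s,a) = (𝔹_h V̂_{h+1})(s,a) − Q̂_h(s,a) satisfies 0 ≤ ι_h(s,a) ≤ 2 Γ_h(s,a) for all h ∈ {1,…,H} and all (s,a) ∈ S × A. -/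
open scoped BigOperators
open MeasureTheory

noncomputable section

/-- Every element of the set defining the robust Bellman value lies in `[0, H-h]`
provided `V` takes values in `[0, H-h-1]`. -/
lemma bellman_set_bounds {S A : Type} [Fintype S] [Fintype A] {H K d : ℕ}
    (M : DRMDP S A H K d) (h : Fin H) (V : S → ℝ)
    (hV : ∀ s, V s ∈ Set.Icc (0 : ℝ) ((H : ℝ) - ((h : ℕ) : ℝ) - 1))
    (s : S) (a : A) :
    ∀ x ∈ {x | ∃ P r, M.inU h P r ∧ x = r s a + ∑ s', P s a s' * V s'},
      0 ≤ x ∧ x ≤ (H : ℝ) - ((h : ℕ) : ℝ) := by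
  rintro x ⟨P, r, ⟨α, hα, hr, hP⟩, rfl⟩
  have hrnn : 0 ≤ r s a := by
    rw [hr]
    apply Finset.sum_nonneg
    intro i _
    exact mul_nonneg (M.φ_nonneg s a i)
      (Finset.sum_nonneg fun k _ => mul_nonneg ((hα i).1 k) (M.θ_nonneg h i k))
  have hPnn : ∀ s', 0 ≤ P s a s' := by
    intro s'
    rw [hP]
    apply Finset.sum_nonneg
    intro i _
    exact mul_nonneg (M.φ_nonneg s a i)
      (Finset.sum_nonneg fun k _ => mul_nonneg ((hα i).1 k) (M.μ_nonneg h i k s'))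
  have hr1 : r s a ≤ 1 := by
    rw [hr]
    calc ∑ i, M.φ s a i * ∑ k, α i k * M.θ h i k
        ≤ ∑ i, M.φ s a i * 1 := by
          apply Finset.sum_le_sum
          intro i _
          apply mul_le_mul_of_nonneg_left _ (M.φ_nonneg s a i)
          calc ∑ k, α i k * M.θ h i k ≤ ∑ k, α i k * 1 := by
                apply Finset.sum_le_sum
                intro k _
                exact mul_le_mul_of_nonneg_left (M.θ_le_one h i k) ((hα i).1 k)
            _ = 1 := by simp [(hα i).2]
      _ = 1 := by simp [M.φ_sum s a]
  have hPsum : ∑ s', P s a s' = 1 := by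
    simp only [hP]
    rw [Finset.sum_comm]
    have : ∀ i ∈ Finset.univ, ∑ s', M.φ s a i * ∑ k, α i k * M.μ h i k s'
        = M.φ s a i := by
      intro i _
      rw [← Finset.mul_sum]
      rw [Finset.sum_comm]
      have : ∀ k ∈ Finset.univ, ∑ s', α i k * M.μ h i k s' = α i k := by
        intro k _
        rw [← Finset.mul_sum, M.μ_sum h i k, mul_one]
      rw [Finset.sum_congr rfl this, (hα i).2, mul_one]
    rw [Finset.sum_congr rfl this, M.φ_sum s a]
  constructor
  · exact add_nonneg hrnn (Finset.sum_nonneg fun s' _ =>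
      mul_nonneg (hPnn s') (hV s').1)
  · have : ∑ s', P s a s' * V s' ≤ (H : ℝ) - ((h : ℕ) : ℝ) - 1 := by
      calc ∑ s', P s a s' * V s'
          ≤ ∑ s', P s a s' * ((H : ℝ) - ((h : ℕ) : ℝ) - 1) := by
            apply Finset.sum_le_sum
            intro s' _
            exact mul_le_mul_of_nonneg_left (hV s').2 (hPnn s')
        _ = (H : ℝ) - ((h : ℕ) : ℝ) - 1 := by
            rw [← Finset.sum_mul, hPsum, one_mul]
    linarith
/-- If `V̂_{h+1}` takes values in `[0, H−h]` (paper indexing; here `Vnext h`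
takes values in `[0, H−h−1]` for 0-indexed `h`, with `Vnext` vanishing at the
last step), `|B̂_h − 𝔹_h V̂_{h+1}| ≤ Γ_h` pointwise with `Γ_h ≥ 0`, and
`Q̂_h = min{B̂_h − Γ_h, H−h+1}⁺`, then the model evaluation error
`ι_h = 𝔹_h V̂_{h+1} − Q̂_h` satisfies `0 ≤ ι_h ≤ 2Γ_h` everywhere. -/
theorem stmt_7 {S A : Type} [Fintype S] [Fintype A] {H K d : ℕ}
    (M : DRMDP S A H K d)
    (Vnext : Fin H → S → ℝ)
    (hVnext : ∀ (h : Fin H) (s : S),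
      Vnext h s ∈ Set.Icc (0 : ℝ) ((H : ℝ) - ((h : ℕ) : ℝ) - 1))
    (Bhat Γ : Fin H → S → A → ℝ)
    (hΓ : ∀ h s a, 0 ≤ Γ h s a)
    (hBhat : ∀ (h : Fin H) (s : S) (a : A),
      |Bhat h s a - M.bellman h (Vnext h) s a| ≤ Γ h s a)
    (Qhat : Fin H → S → A → ℝ)
    (hQhat : ∀ (h : Fin H) (s : S) (a : A),
      Qhat h s a = max (min (Bhat h s a - Γ h s a) ((H : ℝ) - ((h : ℕ) : ℝ))) 0) :
    ∀ (h : Fin H) (s : S) (a : A),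
      0 ≤ M.bellman h (Vnext h) s a - Qhat h s a ∧
      M.bellman h (Vnext h) s a - Qhat h s a ≤ 2 * Γ h s a := by
  intro h s a
  set T := {x | ∃ P r, M.inU h P r ∧ x = r s a + ∑ s', P s a s' * Vnext h s'} with hT
  have hbounds := bellman_set_bounds M h (Vnext h) (hVnext h) s a
  have hb : M.bellman h (Vnext h) s a = sInf T := rfl
  have hb0 : 0 ≤ sInf T := Real.sInf_nonneg (fun x hx => (hbounds x hx).1)
  have hHh : (1 : ℝ) ≤ (H : ℝ) - ((h : ℕ) : ℝ) := by
    have := h.isLt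
    have : ((h : ℕ) : ℝ) + 1 ≤ (H : ℝ) := by exact_mod_cast this
    linarith
  have hbH : sInf T ≤ (H : ℝ) - ((h : ℕ) : ℝ) := by
    rcases Set.eq_empty_or_nonempty T with hTe | ⟨x, hx⟩
    · rw [hTe, Real.sInf_empty]; linarith
    · exact le_trans (csInf_le ⟨0, fun y hy => (hbounds y hy).1⟩ hx) (hbounds x hx).2
  have hB := hBhat h s a
  rw [abs_le] at hB
  rw [hb] at hB ⊢
  rw [hQhat h s a]
  have hG := hΓ h s a
  constructor
  · have h1 : min (Bhat h s a - Γ h s a) ((H : ℝ) - ((h : ℕ) : ℝ)) ≤ sInf T := by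
      refine le_trans (min_le_left _ _) ?_
      linarith [hB.2]
    have : max (min (Bhat h s a - Γ h s a) ((H : ℝ) - ((h : ℕ) : ℝ))) 0 ≤ sInf T :=
      max_le h1 hb0
    linarith
  · have h2 : sInf T - 2 * Γ h s a ≤
        min (Bhat h s a - Γ h s a) ((H : ℝ) - ((h : ℕ) : ℝ)) := by
      apply le_min
      · linarith [hB.1]
      · linarith
    have := le_max_left (min (Bhat h s a - Γ h s a) ((H : ℝ) - ((h : ℕ) : ℝ))) (0 : ℝ)
    linarith

end
end

section
/- (Pessimism) Define recursively for h = H,…,1: V̂_{H+1} ≡ 0; Q̂_h(s,a) = min{ B̂_h(s,a) − Γ_h(s,a), H−h+1 }⁺; π̂_h(·|s) a point mass on an action maximizing Q̂_h(s,·); and V̂_h(s) = max_a Q̂_h(s,a), where B̂_h : S × A → ℝ and Γ_h : S × A → [0,∞) satisfy |B̂_h(s,a) − (𝔹_h V̂_{h+1})(s,a)| ≤ Γ_h(s,a) for all h, s, a. Then the estimated values underestimate the true robust values of the greedy policy: Q̂_h(s,a) ≤ Q_h^{π̂}(s,a) and V̂_h(s) ≤ V_h^{π̂}(s) for all h ∈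 {1,…,H}, s ∈ S, a ∈ A. -/
open scoped BigOperators
open MeasureTheory

noncomputable section

/-- Pessimism: if `Q̂_h = min{B̂_h − Γ_h, H−h+1}⁺`, `V̂_h(s) = max_a Q̂_h(s,a)`
(`V̂_t ≡ 0` for `t ≥ H`), `π̂_h(·|s)` is a point mass on an action maximizing
`Q̂_h(s,·)`, and `|B̂_h − 𝔹_h V̂_{h+1}| ≤ Γ_h` pointwise with `Γ_h ≥ 0`, then the
estimates underestimate the true robust values of the greedy policy:
`Q̂_h ≤ Q_h^{π̂}` and `V̂_h ≤ V_h^{π̂}`. -/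
theorem stmt_8 {S A : Type} [Fintype S] [Fintype A] [Nonempty A] [DecidableEq A]
    {H K d : ℕ} (hK : 1 ≤ K) (M : DRMDP S A H K d)
    (Bhat Γ : Fin H → S → A → ℝ)
    (hΓ : ∀ h s a, 0 ≤ Γ h s a)
    (Qhat : Fin H → S → A → ℝ)
    (hQhat : ∀ (h : Fin H) (s : S) (a : A),
      Qhat h s a = max (min (Bhat h s a - Γ h s a) ((H : ℝ) - ((h : ℕ) : ℝ))) 0)
    (Vhat : ℕ → S → ℝ)
    (hVhat : ∀ (t : ℕ) (ht : t < H) (s : S),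
      Vhat t s = Finset.univ.sup' Finset.univ_nonempty (fun a => Qhat ⟨t, ht⟩ s a))
    (hVhat0 : ∀ t : ℕ, H ≤ t → ∀ s, Vhat t s = 0)
    (hBhat : ∀ (h : Fin H) (s : S) (a : A),
      |Bhat h s a - M.bellman h (Vhat ((h : ℕ) + 1)) s a| ≤ Γ h s a)
    (πhat : Fin H → S → A → ℝ)
    (hπhat : ∀ (h : Fin H) (s : S), ∃ a₀ : A,
      (∀ a, Qhat h s a ≤ Qhat h s a₀) ∧
      ∀ a, πhat h s a = if a = a₀ then (1 : ℝ) else 0) :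
    ∀ (h : Fin H) (s : S),
      (∀ a : A, Qhat h s a ≤ M.robustQ πhat h s a) ∧
      Vhat (h : ℕ) s ≤ M.robustV πhat (h : ℕ) s := by
  classical
  have hQ0 : ∀ (h : Fin H) (s : S) (a : A), 0 ≤ Qhat h s a := fun h s a => by
    rw [hQhat]; exact le_max_right _ _
  have hV0 : ∀ (t : ℕ) (s : S), 0 ≤ Vhat t s := by
    intro t s
    rcases lt_or_ge t H with ht | ht
    · rw [hVhat t ht s]
      obtain ⟨a⟩ := ‹Nonempty A›
      exact le_trans (hQ0 ⟨t, ht⟩ s a) (Finset.le_sup' _ (Finset.mem_univ a))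
    · rw [hVhat0 t ht s]
  have hr0 : ∀ (h : Fin H) (P : S → A → S → ℝ) (r : S → A → ℝ), M.inU h P r →
      ∀ s a, 0 ≤ r s a := by
    rintro h P r ⟨α, hα, hr, hP⟩ s a
    rw [hr s a]
    refine Finset.sum_nonneg fun i _ => mul_nonneg (M.φ_nonneg s a i) ?_
    exact Finset.sum_nonneg fun k _ => mul_nonneg ((hα i).1 k) (M.θ_nonneg h i k)
  have hP0 : ∀ (h : Fin H) (P : S → A → S → ℝ) (r : S → A → ℝ), M.inU h P r →
      ∀ s a s', 0 ≤ P s a s' := by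
    rintro h P r ⟨α, hα, hr, hP⟩ s a s'
    rw [hP s a s']
    refine Finset.sum_nonneg fun i _ => mul_nonneg (M.φ_nonneg s a i) ?_
    exact Finset.sum_nonneg fun k _ => mul_nonneg ((hα i).1 k) (M.μ_nonneg h i k s')
  -- the robust Bellman operator is bounded above by any member of U_h
  have hbell : ∀ (h : Fin H) (Ph : S → A → S → ℝ) (rh : S → A → ℝ), M.inU h Ph rh →
      ∀ s a, M.bellman h (Vhat ((h : ℕ) + 1)) s a ≤
        rh s a + ∑ s', Ph s a s' * Vhat ((h : ℕ) + 1) s' := by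
    intro h Ph rh hU s a
    apply csInf_le
    · refine ⟨0, fun x hx => ?_⟩
      obtain ⟨P', r', hU', rfl⟩ := hx
      have h1 := hr0 h P' r' hU' s a
      have h2 : 0 ≤ ∑ s', P' s a s' * Vhat ((h : ℕ) + 1) s' :=
        Finset.sum_nonneg fun s' _ => mul_nonneg (hP0 h P' r' hU' s a s') (hV0 _ s')
      linarith
    · exact ⟨Ph, rh, hU, rfl⟩
  -- one-step pessimism for Q
  have qstep : ∀ (P : Fin H → S → A → S → ℝ) (r : Fin H → S → A → ℝ),
      (∀ t : Fin H, M.inU t (P t) (r t)) → ∀ (h : Fin H),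
      (∀ s', Vhat ((h : ℕ) + 1) s' ≤ cumW H πhat P r ((h : ℕ) + 1) s') →
      ∀ s a, Qhat h s a ≤ r h s a + ∑ s', P h s a s' * cumW H πhat P r ((h : ℕ) + 1) s' := by
    intro P r hU h hIH s a
    have hsum : ∑ s', P h s a s' * Vhat ((h : ℕ) + 1) s' ≤
        ∑ s', P h s a s' * cumW H πhat P r ((h : ℕ) + 1) s' :=
      Finset.sum_le_sum fun s' _ =>
        mul_le_mul_of_nonneg_left (hIH s') (hP0 h _ _ (hU h) s a s')
    have habs := (abs_le.mp (hBhat h s a)).2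
    have hbl := hbell h (P h) (r h) (hU h) s a
    have hcw0 : 0 ≤ ∑ s', P h s a s' * cumW H πhat P r ((h : ℕ) + 1) s' :=
      Finset.sum_nonneg fun s' _ => mul_nonneg (hP0 h _ _ (hU h) s a s')
        (le_trans (hV0 _ s') (hIH s'))
    have hrr := hr0 h _ _ (hU h) s a
    rw [hQhat]
    refine max_le ?_ (by linarith)
    calc min (Bhat h s a - Γ h s a) ((H : ℝ) - ((h : ℕ) : ℝ))
        ≤ Bhat h s a - Γ h s a := min_le_left _ _
      _ ≤ M.bellman h (Vhat ((h : ℕ) + 1)) s a := by linarith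
      _ ≤ r h s a + ∑ s', P h s a s' * Vhat ((h : ℕ) + 1) s' := hbl
      _ ≤ _ := by linarith
  -- main backward induction
  have vstep : ∀ (P : Fin H → S → A → S → ℝ) (r : Fin H → S → A → ℝ),
      (∀ t : Fin H, M.inU t (P t) (r t)) →
      ∀ (m t : ℕ), H ≤ t + m → ∀ s, Vhat t s ≤ cumW H πhat P r t s := by
    intro P r hU m
    induction m with
    | zero =>
      intro t ht s
      rw [hVhat0 t (by omega) s, cumW, dif_neg (by omega : ¬ t < H)]
    | succ m ih =>
      intro t ht s
      rcases le_or_gt H t with hHt | htH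
      · rw [hVhat0 t hHt s, cumW, dif_neg (by omega : ¬ t < H)]
      · have hIH : ∀ s', Vhat (t + 1) s' ≤ cumW H πhat P r (t + 1) s' :=
          fun s' => ih (t + 1) (by omega) s'
        obtain ⟨a₀, hmax, hpt⟩ := hπhat ⟨t, htH⟩ s
        have hcw : cumW H πhat P r t s =
            r ⟨t, htH⟩ s a₀ + ∑ s', P ⟨t, htH⟩ s a₀ s' * cumW H πhat P r (t + 1) s' := by
          rw [cumW, dif_pos htH]
          rw [Finset.sum_eq_single a₀]
          · rw [hpt a₀, if_pos rfl, one_mul]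
          · intro a _ hne; rw [hpt a, if_neg hne, zero_mul]
          · intro hna; exact absurd (Finset.mem_univ a₀) hna
        rw [hVhat t htH s, hcw]
        apply Finset.sup'_le
        intro a _
        exact le_trans (hmax a) (qstep P r hU ⟨t, htH⟩ hIH s a₀)
  -- a canonical member of each U_h, to show the infima are over nonempty sets
  have hcan : ∀ h : Fin H,
      M.inU h (fun s a s' => ∑ i, M.φ s a i * M.μ h i ⟨0, hK⟩ s')
        (fun s a => ∑ i, M.φ s a i * M.θ h i ⟨0, hK⟩) := by
    intro h
    refine ⟨fun i k => if k = ⟨0, hK⟩ then 1 else 0, fun i => ⟨fun k => ?_, ?_⟩, ?_, ?_⟩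
    · dsimp only; split <;> norm_num
    · simp
    · intro s a
      refine Finset.sum_congr rfl fun i _ => ?_
      congr 1
      simp [ite_mul]
    · intro s a s'
      refine Finset.sum_congr rfl fun i _ => ?_
      congr 1
      simp [ite_mul]
  intro h s
  constructor
  · intro a
    refine le_csInf ⟨_, _, _, hcan, rfl⟩ ?_
    rintro x ⟨P, r, hU, rfl⟩
    exact qstep P r hU h (fun s' => vstep P r hU H ((h : ℕ) + 1) (by omega) s') s a
  · refine le_csInf ⟨_, _, _, hcan, rfl⟩ ?_
    rintro x ⟨P, r, hU, rfl⟩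
    exact vstep P r hU H (h : ℕ) (by omega) s

end
end
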